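/- For all z ∈ ℂ \ (-∞,1], with principal branches, z^{1/2} + (z-1)^{1/2} = φ(z)^{1/2} and z^{1/2} - (z-1)^{1/2} = φ(z)^{-1/2}, where φ(z) = 2(z-1/2) + 2 z^{1/2}(z-1)^{1/2}. -/

import Mathlib

/-!
Write `a = z^{1/2}` and `b = (z-1)^{1/2}`. Since `a² = z` and `b² = z - 1`, one has
`φ(z) = a² + b² + 2ab = (a + b)²` and `(a - b)(a + b) = a² - b² = 1`. Principal square roots
have nonnegative real part, and `Re a > 0` off `(-∞, 0]`, so `a + b` lies in the right
half-plane, where it is the principal square root of its own square.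
-/

/-- The conformal map `φ(z) = 2(z - 1/2) + 2 z^{1/2}(z-1)^{1/2}` (principal branches). -/
noncomputable def phiMap (z : ℂ) : ℂ :=
  2 * (z - 1/2) + 2 * z ^ ((1:ℂ)/2) * (z - 1) ^ ((1:ℂ)/2)

open Complex

lemma Complex.cpow_one_half_mul_self (z : ℂ) : z ^ (1 / 2 : ℂ) * z ^ (1 / 2 : ℂ) = z := by
  rw [← sq, one_div, cpow_ofNat_inv_pow]

lemma Complex.re_cpow_one_half_nonneg (z : ℂ) : 0 ≤ (z ^ (1 / 2 : ℂ)).re := by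
  rw [one_div, cpow_inv_two_re]
  exact Real.sqrt_nonneg _

lemma Complex.re_cpow_one_half_pos {z : ℂ} (hz : z ∈ slitPlane) : 0 < (z ^ (1 / 2 : ℂ)).re := by
  rw [one_div, cpow_inv_two_re, Real.sqrt_pos]
  have hre : |z.re| ≤ ‖z‖ := abs_re_le_norm z
  rcases mem_slitPlane_iff.mp hz with hpos | him
  · linarith [abs_le.mp hre]
  · linarith [abs_lt.mp (abs_re_lt_norm.mpr him)]

lemma phiMap_eq_sq (z : ℂ) : phiMap z = (z ^ (1 / 2 : ℂ) + (z - 1) ^ (1 / 2 : ℂ)) ^ 2 := by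
  unfold phiMap
  linear_combination -cpow_one_half_mul_self z - cpow_one_half_mul_self (z - 1)

lemma cpow_one_half_sub_mul_add (z : ℂ) :
    (z ^ (1 / 2 : ℂ) - (z - 1) ^ (1 / 2 : ℂ)) * (z ^ (1 / 2 : ℂ) + (z - 1) ^ (1 / 2 : ℂ)) = 1 := by
  linear_combination cpow_one_half_mul_self z - cpow_one_half_mul_self (z - 1)

lemma phiMap_cpow_one_half {z : ℂ} (hz : z ∈ slitPlane) :
    phiMap z ^ (1 / 2 : ℂ) = z ^ (1 / 2 : ℂ) + (z - 1) ^ (1 / 2 : ℂ) := by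
  have hre : 0 < (z ^ (1 / 2 : ℂ) + (z - 1) ^ (1 / 2 : ℂ)).re := by
    rw [add_re]
    linarith [re_cpow_one_half_pos hz, re_cpow_one_half_nonneg (z - 1)]
  rw [phiMap_eq_sq]
  simpa only [one_div] using sq_cpow_two_inv hre

theorem sqrt_sum_eq_phi_sqrt (z : ℂ) (hz : ¬(z.im = 0 ∧ z.re ≤ 1)) :
    z ^ ((1:ℂ)/2) + (z - 1) ^ ((1:ℂ)/2) = (phiMap z) ^ ((1:ℂ)/2) ∧
    z ^ ((1:ℂ)/2) - (z - 1) ^ ((1:ℂ)/2) = (phiMap z) ^ (-((1:ℂ)/2)) := by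
  have hslit : z ∈ slitPlane := by
    rw [mem_slitPlane_iff]
    by_contra! h
    exact hz ⟨h.2, h.1.trans zero_le_one⟩
  have hsqrt := phiMap_cpow_one_half hslit
  refine ⟨hsqrt.symm, ?_⟩
  rw [cpow_neg, hsqrt]
  exact eq_inv_of_mul_eq_one_left (cpow_one_half_sub_mul_add z)
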